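/- arXiv:1211.2604 — 4 statements merged into one kernel-verified Lean document; each statement's English description precedes it below -/
import Mathlib

section
/- Let X, Y be Banach spaces, G ⊆ X open, a ∈ G, and f : G → Y a mapping. The following are equivalent: (i) the one-sided Hadamard directional derivative f'_{H+}(a,0) exists; (ii) the Hadamard directional derivative f'_H(a,0) exists; (iii) f'_H(a,0) exists and equals 0; (iv) f is Lipschitz at a, i.e., limsup_{y→a} ‖f(y)-f(a)‖/‖y-a‖ < ∞. -/
open Filter Topology Set Metric

section Defs
variable {X Y : Type*} [NormedAddCommGroup X] [NormedSpace ℝ X]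
  [NormedAddCommGroup Y] [NormedSpace ℝ Y]

/-- One-sided directional derivative: `f'₊(x,v) = L`. -/
def HasPosDirDeriv (f : X → Y) (x v : X) (L : Y) : Prop :=
  Tendsto (fun t : ℝ => t⁻¹ • (f (x + t • v) - f x)) (𝓝[>] (0:ℝ)) (𝓝 L)

/-- Two-sided directional derivative: `f'(x,v) = L`. -/
def HasDirDeriv (f : X → Y) (x v : X) (L : Y) : Prop :=
  Tendsto (fun t : ℝ => t⁻¹ • (f (x + t • v) - f x)) (𝓝[≠] (0:ℝ)) (𝓝 L)

/-- One-sided Hadamard directional derivative: `f'_{H+}(x,v) = L`. -/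
def HasHadamardPosDirDeriv (f : X → Y) (x v : X) (L : Y) : Prop :=
  Tendsto (fun p : X × ℝ => p.2⁻¹ • (f (x + p.2 • p.1) - f x))
    ((𝓝 v) ×ˢ (𝓝[>] (0:ℝ))) (𝓝 L)

/-- Two-sided Hadamard directional derivative: `f'_H(x,v) = L`. -/
def HasHadamardDirDeriv (f : X → Y) (x v : X) (L : Y) : Prop :=
  Tendsto (fun p : X × ℝ => p.2⁻¹ • (f (x + p.2 • p.1) - f x))
    ((𝓝 v) ×ˢ (𝓝[≠] (0:ℝ))) (𝓝 L)

/-- `f` is Lipschitz at the point `x`: `limsup_{y→x} ‖f y - f x‖/‖y-x‖ < ∞`. -/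
def LipschitzAtPt (f : X → Y) (x : X) : Prop :=
  ∃ K δ : ℝ, 0 < δ ∧ ∀ y, ‖y - x‖ < δ → ‖f y - f x‖ ≤ K * ‖y - x‖

/-- `A` is porous at `x` in the direction `v`. -/
def PorousAt (A : Set X) (x v : X) : Prop :=
  ∃ p > (0:ℝ), ∃ t : ℕ → ℝ, (∀ n, 0 < t n) ∧ Tendsto t atTop (𝓝 0) ∧
    ∀ n, ball (x + t n • v) (p * t n) ∩ A = ∅

/-- `A` is directionally porous. -/
def DirectionallyPorous (A : Set X) : Prop :=
  ∀ x ∈ A, ∃ v : X, v ≠ 0 ∧ PorousAt A x v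

/-- `A` is σ-directionally porous. -/
def SigmaDirectionallyPorous (A : Set X) : Prop :=
  ∃ s : ℕ → Set X, (∀ n, DirectionallyPorous (s n)) ∧ A = ⋃ n, s n

/-- The open cone `C(x,v,δ)`. -/
def Cone (x v : X) (δ : ℝ) : Set X :=
  {y : X | y ≠ x ∧ ‖v - ‖y - x‖⁻¹ • (y - x)‖ < δ}

/-- `f` is Hadamard differentiable at `x` with derivative `L`: the difference quotients
converge to `L v` uniformly in `v` from each compact set. -/
def HadamardDifferentiableAt (f : X → Y) (x : X) (L : X →L[ℝ] Y) : Prop :=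
  ∀ C : Set X, IsCompact C →
    TendstoUniformlyOn (fun (t : ℝ) (v : X) => t⁻¹ • (f (x + t • v) - f x))
      (fun v => L v) (𝓝[≠] (0:ℝ)) C


end Defs

/-! Choosing `t` proportional to `‖y - a‖` and `z = t⁻¹ • (y - a)` keeps the direction `z` in a
fixed small ball, so a bound on the difference quotients near the direction `0` is a Lipschitz
bound at `a`. Conversely, a Lipschitz constant `K` bounds `‖t⁻¹ • (f (a + t • z) - f a)‖` by
`K * ‖z‖`, which tends to `0` as `z → 0`; in particular the limit is `0` from both sides. -/

section HadamardAtZero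

variable {X Y : Type*} [NormedAddCommGroup X] [NormedSpace ℝ X]
  [NormedAddCommGroup Y] {f : X → Y} {a : X}

theorem lipschitzAtPt_of_norm_sub_le {C r δ : ℝ} (hr : 0 < r) (hδ : 0 < δ)
    (h : ∀ z : X, ‖z‖ < r → ∀ t : ℝ, 0 < t → t < δ → ‖f (a + t • z) - f a‖ ≤ C * t) :
    LipschitzAtPt f a := by
  refine ⟨2 * C / r, r * δ / 2, by positivity, fun y hy => ?_⟩
  rcases eq_or_ne y a with rfl | hya
  · simp
  have hy₀ : 0 < ‖y - a‖ := norm_pos_iff.2 (sub_ne_zero.2 hya)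
  set t := 2 * ‖y - a‖ / r with ht_def
  have ht : 0 < t := by positivity
  have htδ : t < δ := by rw [ht_def, div_lt_iff₀ hr]; linarith
  have hz : ‖t⁻¹ • (y - a)‖ < r := by
    rw [norm_smul, norm_inv, Real.norm_of_nonneg ht.le, ht_def]
    field_simp
    linarith
  have hy : a + t • t⁻¹ • (y - a) = y := by
    rw [smul_inv_smul₀ ht.ne', add_sub_cancel]
  calc ‖f y - f a‖ = ‖f (a + t • t⁻¹ • (y - a)) - f a‖ := by rw [hy]
    _ ≤ C * t := h _ hz t ht htδ
    _ = 2 * C / r * ‖y - a‖ := by rw [ht_def]; ring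

variable [NormedSpace ℝ Y]

theorem HasHadamardDirDeriv.hasHadamardPosDirDeriv {v : X} {L : Y}
    (h : HasHadamardDirDeriv f a v L) : HasHadamardPosDirDeriv f a v L :=
  h.mono_left (prod_mono le_rfl (nhdsWithin_mono _ fun _ ht => ne_of_gt ht))

theorem HasHadamardPosDirDeriv.lipschitzAtPt {L : Y} (h : HasHadamardPosDirDeriv f a 0 L) :
    LipschitzAtPt f a := by
  have hbound : ∀ᶠ p : X × ℝ in 𝓝 0 ×ˢ 𝓝[>] 0,
      ‖p.2⁻¹ • (f (a + p.2 • p.1) - f a)‖ ≤ ‖L‖ + 1 :=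
    h.norm.eventually_le_const (lt_add_one _)
  obtain ⟨⟨r, δ⟩, ⟨hr, hδ⟩, hrδ⟩ :=
    (Metric.nhds_basis_ball.prod (nhdsGT_basis 0)).eventually_iff.1 hbound
  refine lipschitzAtPt_of_norm_sub_le (C := ‖L‖ + 1) hr hδ fun z hz t ht htδ => ?_
  have hq := hrδ (mk_mem_prod (mem_ball_zero_iff.2 hz) ⟨ht, htδ⟩)
  rw [norm_smul, norm_inv, Real.norm_of_nonneg ht.le, inv_mul_le_iff₀ ht] at hq
  linarith

theorem LipschitzAtPt.hasHadamardDirDeriv_zero (h : LipschitzAtPt f a) :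
    HasHadamardDirDeriv f a 0 0 := by
  obtain ⟨K, δ, hδ, hK⟩ := h
  have hsmul : Tendsto (fun p : X × ℝ => p.2 • p.1) (𝓝 0 ×ˢ 𝓝[≠] 0) (𝓝 0) := by
    have := (tendsto_snd.mono_right nhdsWithin_le_nhds).smul
      (tendsto_fst (f := 𝓝 (0 : X)) (g := 𝓝[≠] (0 : ℝ)))
    rwa [zero_smul] at this
  have hsmall : ∀ᶠ p : X × ℝ in 𝓝 0 ×ˢ 𝓝[≠] 0, ‖p.2 • p.1‖ < δ :=
    hsmul.norm.eventually_lt_const (by simpa using hδ)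
  have hne : ∀ᶠ p : X × ℝ in 𝓝 0 ×ˢ 𝓝[≠] 0, p.2 ≠ 0 :=
    (eventually_mem_nhdsWithin (s := {0}ᶜ)).prod_inr _
  refine squeeze_zero_norm' (a := fun p => K * ‖p.1‖) ?_ ?_
  · filter_upwards [hsmall, hne] with ⟨z, t⟩ hs ht
    have hlip := hK (a + t • z) (by simpa using hs)
    rw [add_sub_cancel_left, norm_smul, Real.norm_eq_abs] at hlip
    calc ‖t⁻¹ • (f (a + t • z) - f a)‖ = |t|⁻¹ * ‖f (a + t • z) - f a‖ := by
          rw [norm_smul, norm_inv, Real.norm_eq_abs]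
      _ ≤ |t|⁻¹ * (K * (|t| * ‖z‖)) := by gcongr
      _ = K * ‖z‖ := by field_simp
  · simpa using (tendsto_fst (f := 𝓝 (0 : X)) (g := 𝓝[≠] (0 : ℝ))).norm.const_mul K

end HadamardAtZero

theorem stmt7_general {X Y : Type*} [NormedAddCommGroup X] [NormedSpace ℝ X]
    [NormedAddCommGroup Y] [NormedSpace ℝ Y]
    (f : X → Y) (a : X) :
    ((∃ L, HasHadamardPosDirDeriv f a 0 L) ↔ (∃ L, HasHadamardDirDeriv f a 0 L)) ∧
    ((∃ L, HasHadamardDirDeriv f a 0 L) ↔ HasHadamardDirDeriv f a 0 0) ∧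
    (HasHadamardDirDeriv f a 0 0 ↔ LipschitzAtPt f a) :=
  ⟨⟨fun ⟨_, hL⟩ => ⟨0, hL.lipschitzAtPt.hasHadamardDirDeriv_zero⟩,
      fun ⟨L, hL⟩ => ⟨L, hL.hasHadamardPosDirDeriv⟩⟩,
    ⟨fun ⟨_, hL⟩ => hL.hasHadamardPosDirDeriv.lipschitzAtPt.hasHadamardDirDeriv_zero,
      fun h => ⟨0, h⟩⟩,
    ⟨fun h => h.hasHadamardPosDirDeriv.lipschitzAtPt, LipschitzAtPt.hasHadamardDirDeriv_zero⟩⟩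

theorem stmt7 {X Y : Type*} [NormedAddCommGroup X] [NormedSpace ℝ X] [CompleteSpace X]
    [NormedAddCommGroup Y] [NormedSpace ℝ Y] [CompleteSpace Y]
    (G : Set X) (hG : IsOpen G) (f : X → Y) (a : X) (ha : a ∈ G) :
    ((∃ L, HasHadamardPosDirDeriv f a 0 L) ↔ (∃ L, HasHadamardDirDeriv f a 0 L)) ∧
    ((∃ L, HasHadamardDirDeriv f a 0 L) ↔ HasHadamardDirDeriv f a 0 0) ∧
    (HasHadamardDirDeriv f a 0 0 ↔ LipschitzAtPt f a) :=
  stmt7_general f a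
end

section
/- Let X be a separable Banach space, Y a Banach space, G ⊆ X open, and f : G → Y a mapping. Let A be the set of all x ∈ G at which f is Lipschitz and for which there exist v, w ∈ X such that f'₊(x,v) and f'₊(x,w) exist but either f'₊(x,v-w) does not exist or f'₊(x,v-w) ≠ f'₊(x,v) - f'₊(x,w). Then A is σ-directionally porous. -/
open Filter Topology Set Metric

/-!
Cut the set into countably many pieces, indexed by a Lipschitz constant `M`, a scale `r` and two
points of a dense sequence close to the directions `v` and `w`: on a piece, the Lipschitz bound
and the approximations `f (x + s • v) ≈ f x + s • f'₊(x, v)` (same for `w`) hold with error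
`ε(M) * s` for all `s < r`, while the defect in the direction `v - w` exceeds `t / M` for
arbitrarily small `t`. If a piece `S` were porous at `x ∈ S` in no direction, then `S` would
contain points near `x + t • v`, `x + t • (v - w)`, `x + (K * t) • w` and `x + t • (v + K • w)` for
all small `t`; chaining the uniform approximations at these points, and moving between nearby
points by the Lipschitz bound, bounds that defect by `(32 ε + 2 M² / K) t < t / M`.
-/

theorem eventually_nhdsGT_zero_mul_lt (c : ℝ) {r : ℝ} (hr : 0 < r) :
    ∀ᶠ t in 𝓝[>] (0 : ℝ), c * t < r := by
  have : Tendsto (fun t : ℝ => c * t) (𝓝[>] 0) (𝓝 0) := by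
    simpa using (tendsto_id.const_mul c).mono_left (nhdsWithin_le_nhds (a := (0 : ℝ)))
  exact this.eventually_lt_const hr

section Porosity
variable {X : Type*} [NormedAddCommGroup X] [NormedSpace ℝ X]

theorem PorousAt.mono {S T : Set X} {x v : X} (h : PorousAt S x v) (hTS : T ⊆ S) :
    PorousAt T x v := by
  obtain ⟨p, hp, t, ht, htl, hball⟩ := h
  exact ⟨p, hp, t, ht, htl, fun n =>
    subset_empty_iff.1 <| (hball n) ▸ inter_subset_inter_right _ hTS⟩

theorem DirectionallyPorous.mono {S T : Set X} (h : DirectionallyPorous S) (hTS : T ⊆ S) :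
    DirectionallyPorous T := fun x hx =>
  (h x (hTS hx)).imp fun _ ⟨hv, hp⟩ => ⟨hv, hp.mono hTS⟩

theorem sigmaDirectionallyPorous_of_subset_iUnion {ι : Type*} [Countable ι] [Nonempty ι]
    {A : Set X} {P : ι → Set X} (hP : ∀ i, DirectionallyPorous (P i)) (hA : A ⊆ ⋃ i, P i) :
    SigmaDirectionallyPorous A := by
  obtain ⟨g, hg⟩ := exists_surjective_nat ι
  refine ⟨fun n => A ∩ P (g n), fun n => (hP (g n)).mono inter_subset_right, ?_⟩
  ext x
  simp only [mem_iUnion, mem_inter_iff]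
  refine ⟨fun hx => ?_, fun ⟨_, hx, _⟩ => hx⟩
  obtain ⟨i, hi⟩ := mem_iUnion.1 (hA hx)
  obtain ⟨n, rfl⟩ := hg i
  exact ⟨n, hx, hi⟩

theorem not_porousAt_zero {S : Set X} {x : X} (hx : x ∈ S) : ¬PorousAt S x 0 := by
  rintro ⟨p, hp, t, ht, -, hball⟩
  have hx' : x ∈ ball (x + t 0 • (0 : X)) (p * t 0) := by
    simpa using mul_pos hp (ht 0)
  exact (hball 0).subset ⟨hx', hx⟩

theorem eventually_exists_near_of_not_porousAt {S : Set X} {x c : X} (h : ¬PorousAt S x c)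
    {ρ : ℝ} (hρ : 0 < ρ) : ∀ᶠ τ in 𝓝[>] (0 : ℝ), ∃ z ∈ S, ‖z - (x + τ • c)‖ < ρ * τ := by
  by_contra hfar
  obtain ⟨t, ht, hfar⟩ := exists_seq_forall_of_frequently <|
    (not_eventually.1 hfar).and_eventually (self_mem_nhdsWithin (s := Ioi (0 : ℝ)))
  refine h ⟨ρ, hρ, t, fun n => (hfar n).2, tendsto_nhds_of_tendsto_nhdsWithin ht, fun n => ?_⟩
  refine eq_empty_iff_forall_notMem.2 fun z ⟨hzb, hzS⟩ => (hfar n).1 ⟨z, hzS, ?_⟩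
  rwa [mem_ball, dist_eq_norm] at hzb

end Porosity

section LocalApproximation
variable {X Y : Type*} [NormedAddCommGroup X] [NormedAddCommGroup Y]

def LipschitzNear (f : X → Y) (x : X) (M r : ℝ) : Prop :=
  ∀ y, ‖y - x‖ < r → ‖f y - f x‖ ≤ M * ‖y - x‖

theorem LipschitzNear.mono {f : X → Y} {x : X} {K M δ r : ℝ} (h : LipschitzNear f x K δ)
    (hKM : K ≤ M) (hrδ : r ≤ δ) : LipschitzNear f x M r := fun y hy =>
  (h y (hy.trans_le hrδ)).trans (by gcongr)

variable [NormedSpace ℝ X] [NormedSpace ℝ Y]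

theorem norm_sub_smul_eq_mul_norm_inv_smul_sub {s : ℝ} (hs : 0 < s) (A L : Y) :
    ‖A - s • L‖ = s * ‖s⁻¹ • A - L‖ := by
  rw [← norm_smul_of_nonneg hs.le, smul_sub, smul_inv_smul₀ hs.ne']

def DirDerivApprox (f : X → Y) (x v : X) (L : Y) (ε r : ℝ) : Prop :=
  ∀ s, 0 < s → s < r → ‖f (x + s • v) - f x - s • L‖ ≤ s * ε

variable {f : X → Y} {x v : X} {L : Y}

theorem DirDerivApprox.mono {ε r r' : ℝ} (h : DirDerivApprox f x v L ε r) (hr : r' ≤ r) :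
    DirDerivApprox f x v L ε r' := fun s hs hsr => h s hs (hsr.trans_le hr)

theorem HasPosDirDeriv.exists_dirDerivApprox (h : HasPosDirDeriv f x v L) {ε : ℝ} (hε : 0 < ε) :
    ∃ r > 0, DirDerivApprox f x v L ε r := by
  obtain ⟨r, hr, hclose⟩ := Metric.tendsto_nhdsWithin_nhds.1 h ε hε
  refine ⟨r, hr, fun s hs hsr => ?_⟩
  have hdist := hclose (mem_Ioi.2 hs) (by rwa [Real.dist_0_eq_abs, abs_of_pos hs])
  rw [dist_eq_norm] at hdist
  rw [norm_sub_smul_eq_mul_norm_inv_smul_sub hs]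
  gcongr

theorem exists_frequently_le_of_not_hasPosDirDeriv (h : ¬HasPosDirDeriv f x v L) :
    ∃ η > 0, ∃ᶠ t in 𝓝[>] (0 : ℝ), η * t ≤ ‖f (x + t • v) - f x - t • L‖ := by
  obtain ⟨η, hη, hfar⟩ := not_forall₂.1 (mt Metric.tendsto_nhds.2 h)
  refine ⟨η, hη, ((not_eventually.1 hfar).and_eventually self_mem_nhdsWithin).mono ?_⟩
  rintro t ⟨hfar, ht⟩
  rw [dist_eq_norm, not_lt] at hfar
  rw [norm_sub_smul_eq_mul_norm_inv_smul_sub ht, mul_comm]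
  gcongr

theorem DirDerivApprox.norm_sub_le {z d b : X} {ε r M : ℝ} (hz : DirDerivApprox f z d L ε r)
    (hb : LipschitzNear f b M r) (hM : 0 ≤ M) {s η : ℝ} (hs : 0 < s) (hsr : s < r)
    (hη : ‖z + s • d - b‖ ≤ η) (hηr : η < r) :
    ‖f b - f z - s • L‖ ≤ s * ε + M * η := by
  have hfb : ‖f (z + s • d) - f b‖ ≤ M * η :=
    (hb _ (hη.trans_lt hηr)).trans (by gcongr)
  calc ‖f b - f z - s • L‖ = ‖(f (z + s • d) - f z - s • L) - (f (z + s • d) - f b)‖ := by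
        congr 1; abel
    _ ≤ s * ε + M * η := norm_sub_le_of_le (hz s hs hsr) hfb

theorem DirDerivApprox.norm_le {ε r M : ℝ} (h : DirDerivApprox f x v L ε r)
    (hx : LipschitzNear f x M r) (hv : ‖v‖ ≤ M) {s : ℝ} (hs : 0 < s) (hsr : s < r)
    (hsM : s * M < r) : ‖L‖ ≤ M * M + ε := by
  have hsv : ‖x + s • v - x‖ ≤ s * M := by
    rw [add_sub_cancel_left, norm_smul_of_nonneg hs.le]; gcongr
  have hM : 0 ≤ M := (norm_nonneg v).trans hv
  have hsL : s * ‖L‖ ≤ s * (M * M + ε) :=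
    calc s * ‖L‖ = ‖(f (x + s • v) - f x) - (f (x + s • v) - f x - s • L)‖ := by
          rw [sub_sub_cancel, norm_smul_of_nonneg hs.le]
      _ ≤ M * (s * M) + s * ε :=
          norm_sub_le_of_le ((hx _ (hsv.trans_lt hsM)).trans (by gcongr)) (h s hs hsr)
      _ = s * (M * M + ε) := by ring
  exact le_of_mul_le_mul_left hsL hs

end LocalApproximation

section Nonadditivity
variable {X Y : Type*} [NormedAddCommGroup X] [NormedSpace ℝ X]
  [NormedAddCommGroup Y] [NormedSpace ℝ Y]

theorem norm_add_smul_sub_le {z b p q d e : X} {s : ℝ} (hs : 0 ≤ s) (hq : p + s • e = q) :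
    ‖z + s • d - b‖ ≤ ‖z - p‖ + s * ‖d - e‖ + ‖b - q‖ := by
  calc ‖z + s • d - b‖ = ‖(z - p) + s • (d - e) - (b - q)‖ := by rw [← hq]; congr 1; module
    _ ≤ ‖z - p‖ + s * ‖d - e‖ + ‖b - q‖ := by
      rw [← norm_smul_of_nonneg hs]; exact norm_sub_le_of_le (norm_add_le _ _) le_rfl

structure ApproxDirDerivPair (f : X → Y) (M ε ρ r : ℝ) (a b x : X) where
  v : X
  w : X
  Lv : Y
  Lw : Y
  lipschitzNear : LipschitzNear f x M r
  norm_v_le : ‖v‖ ≤ M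
  norm_v_sub_le : ‖v - a‖ ≤ ρ
  norm_w_sub_le : ‖w - b‖ ≤ ρ
  approx_v : DirDerivApprox f x v Lv ε r
  approx_w : DirDerivApprox f x w Lw ε r

namespace ApproxDirDerivPair
variable {f : X → Y} {M ε ρ r : ℝ} {a b x x' : X}

theorem norm_v_sub_v_le (d : ApproxDirDerivPair f M ε ρ r a b x)
    (d' : ApproxDirDerivPair f M ε ρ r a b x') : ‖d'.v - d.v‖ ≤ 2 * ρ := by
  rw [← sub_sub_sub_cancel_right d'.v d.v a, two_mul]
  exact norm_sub_le_of_le d'.norm_v_sub_le d.norm_v_sub_le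

theorem norm_w_sub_w_le (d : ApproxDirDerivPair f M ε ρ r a b x)
    (d' : ApproxDirDerivPair f M ε ρ r a b x') : ‖d'.w - d.w‖ ≤ 2 * ρ := by
  rw [← sub_sub_sub_cancel_right d'.w d.w b, two_mul]
  exact norm_sub_le_of_le d'.norm_w_sub_le d.norm_w_sub_le

end ApproxDirDerivPair

/-- Comparing the increments along `w` from `x` and from `zb` over the long scale `K * t` shows
that the `w`-derivative at `zb` is within `O(M ^ 2 / K)` of the one at `x`; short-scale
comparisons through `z₁` then bound the defect in the direction `v - w`. -/
theorem norm_nonadditivity_le {f : X → Y} {M ε ρ r K t : ℝ} {a b x z₁ zb yK uK : X}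
    (d : ApproxDirDerivPair f M ε ρ r a b x) (db : ApproxDirDerivPair f M ε ρ r a b zb)
    (dy : ApproxDirDerivPair f M ε ρ r a b yK) (h₁ : LipschitzNear f z₁ M r)
    (hu : LipschitzNear f uK M r) (hρ : 0 ≤ ρ) (hMρ : M * ρ ≤ ε) (hK : 1 ≤ K) (ht : 0 < t)
    (hr : (2 * K + 4) * (ρ * t) < r) (hr' : (K + 1) * t < r) (hrM : t * M < r)
    (hz₁ : ‖z₁ - (x + t • d.v)‖ ≤ ρ * t) (hzb : ‖zb - (x + t • (d.v - d.w))‖ ≤ ρ * t)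
    (hyK : ‖yK - (x + (K * t) • d.w)‖ ≤ ρ * (K * t))
    (huK : ‖uK - (x + t • (d.v + K • d.w))‖ ≤ ρ * t) :
    ‖f (x + t • (d.v - d.w)) - f x - t • (d.Lv - d.Lw)‖ ≤ (32 * ε + 2 * M ^ 2 / K) * t := by
  have hM : 0 ≤ M := (norm_nonneg _).trans d.norm_v_le
  have hρt : 0 ≤ ρ * t := mul_nonneg hρ ht.le
  have hKt : 0 ≤ K * t := by positivity
  have hwb := d.norm_w_sub_w_le db
  have hvy := d.norm_v_sub_v_le dy
  have E₁ : ‖f z₁ - f x - t • d.Lv‖ ≤ t * ε + M * (ρ * t) :=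
    d.approx_v.norm_sub_le h₁ hM ht (by linarith) (by rwa [norm_sub_rev]) (by nlinarith)
  have E₂ : ‖f z₁ - f zb - t • db.Lw‖ ≤ t * ε + M * (ρ * t + t * (2 * ρ) + ρ * t) :=
    db.approx_w.norm_sub_le h₁ hM ht (by linarith)
      ((norm_add_smul_sub_le (p := x + t • (d.v - d.w)) (e := d.w) (q := x + t • d.v) ht.le
        (by module)).trans (by gcongr)) (by nlinarith)
  have E₃ : ‖f uK - f zb - ((K + 1) * t) • db.Lw‖
      ≤ (K + 1) * t * ε + M * (ρ * t + (K + 1) * t * (2 * ρ) + ρ * t) :=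
    db.approx_w.norm_sub_le hu hM (by positivity) hr'
      ((norm_add_smul_sub_le (p := x + t • (d.v - d.w)) (e := d.w)
        (q := x + t • (d.v + K • d.w)) (by positivity) (by module)).trans (by gcongr))
      (by nlinarith)
  have E₄ : ‖f yK - f x - (K * t) • d.Lw‖ ≤ K * t * ε + M * (ρ * (K * t)) :=
    d.approx_w.norm_sub_le dy.lipschitzNear hM (by positivity) (by nlinarith)
      (by rwa [norm_sub_rev]) (by nlinarith)
  have E₅ : ‖f uK - f yK - t • dy.Lv‖ ≤ t * ε + M * (ρ * (K * t) + t * (2 * ρ) + ρ * t) :=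
    dy.approx_v.norm_sub_le hu hM ht (by nlinarith)
      ((norm_add_smul_sub_le (p := x + (K * t) • d.w) (e := d.v)
        (q := x + t • (d.v + K • d.w)) ht.le (by module)).trans (by gcongr)) (by nlinarith)
  have E₆ : ‖f (x + t • (d.v - d.w)) - f zb‖ ≤ M * (ρ * t) :=
    (db.lipschitzNear _ (by rw [norm_sub_rev]; nlinarith)).trans (by rw [norm_sub_rev]; gcongr)
  have hLv : ‖d.Lv‖ ≤ M * M + ε :=
    d.approx_v.norm_le d.lipschitzNear d.norm_v_le ht (by nlinarith) hrM
  have hLy : ‖dy.Lv‖ ≤ M * M + ε :=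
    dy.approx_v.norm_le dy.lipschitzNear dy.norm_v_le ht (by nlinarith) hrM
  have hK0 : 0 < K := by linarith
  have hKD := calc
    K * ‖f (x + t • (d.v - d.w)) - f x - t • (d.Lv - d.Lw)‖
      = ‖K • ((f (x + t • (d.v - d.w)) - f zb) - (f z₁ - f zb - t • db.Lw)
            + (f z₁ - f x - t • d.Lv))
          - ((f uK - f yK - t • dy.Lv) + (f yK - f x - (K * t) • d.Lw) - (f z₁ - f x - t • d.Lv)
            - (f uK - f zb - ((K + 1) * t) • db.Lw) + (f z₁ - f zb - t • db.Lw))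
          - t • (dy.Lv - d.Lv)‖ := by
        rw [← norm_smul_of_nonneg hK0.le]; congr 1; module
    _ ≤ _ := norm_sub_le_of_le (norm_sub_le_of_le
          ((norm_smul_of_nonneg hK0.le _).trans_le (mul_le_mul_of_nonneg_left
            (norm_add_le_of_le (norm_sub_le_of_le E₆ E₂) E₁) hK0.le))
          (norm_add_le_of_le
            (norm_sub_le_of_le (norm_sub_le_of_le (norm_add_le_of_le E₅ E₄) E₁) E₃) E₂))
        ((norm_smul_of_nonneg ht.le _).trans_le (mul_le_mul_of_nonneg_left
          (norm_sub_le_of_le hLy hLv) ht.le))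
  have hε : 0 ≤ ε := (mul_nonneg hM hρ).trans hMρ
  have hMρt : M * (ρ * t) ≤ ε * t := by rw [← mul_assoc]; gcongr
  have hscale : K * ((32 * ε + 2 * M ^ 2 / K) * t) = 32 * (K * (ε * t)) + 2 * (M ^ 2 * t) := by
    field_simp
  refine le_of_mul_le_mul_left (hKD.trans ?_) hK0
  rw [hscale]
  linarith [mul_le_mul_of_nonneg_left hMρt hK0.le,
    mul_le_mul_of_nonneg_right hK (mul_nonneg hε ht.le)]

theorem eventually_norm_nonadditivity_le {f : X → Y} {M ε ρ r K : ℝ} {a b x : X} {S : Set X}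
    (hx : ∀ c, ¬PorousAt S x c) (hS : ∀ z ∈ S, Nonempty (ApproxDirDerivPair f M ε ρ r a b z))
    (d : ApproxDirDerivPair f M ε ρ r a b x) (hρ : 0 < ρ) (hMρ : M * ρ ≤ ε) (hr : 0 < r)
    (hK : 1 ≤ K) :
    ∀ᶠ t in 𝓝[>] 0,
      ‖f (x + t • (d.v - d.w)) - f x - t • (d.Lv - d.Lw)‖ ≤ (32 * ε + 2 * M ^ 2 / K) * t := by
  have near (c : X) := eventually_exists_near_of_not_porousAt (hx c) hρ
  filter_upwards [self_mem_nhdsWithin, near d.v, near (d.v - d.w), near (d.v + K • d.w),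
    eventually_nhdsGT_zero_mul_left (by linarith) (near d.w), eventually_nhdsGT_zero_mul_lt _ hr,
    eventually_nhdsGT_zero_mul_lt (K + 1) hr, eventually_nhdsGT_zero_mul_lt M hr]
    with t ht ⟨z₁, hz₁S, hz₁⟩ ⟨zb, hzbS, hzb⟩ ⟨uK, huKS, huK⟩ ⟨yK, hyKS, hyK⟩ hr hr' hrM
  obtain ⟨d₁⟩ := hS z₁ hz₁S
  obtain ⟨db⟩ := hS zb hzbS
  obtain ⟨du⟩ := hS uK huKS
  obtain ⟨dy⟩ := hS yK hyKS
  exact norm_nonadditivity_le d db dy d₁.lipschitzNear du.lipschitzNear hρ.le hMρ hK ht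
    (by rwa [← mul_assoc]) hr' (by rwa [mul_comm]) hz₁.le hzb.le hyK.le huK.le

end Nonadditivity

section Decomposition
variable {X Y : Type*} [NormedAddCommGroup X] [NormedSpace ℝ X]
  [NormedAddCommGroup Y] [NormedSpace ℝ Y]

/-- With `ε = 1 / (64 M)`, `ρ = 1 / (64 M²)` and `K = 8 M³`, the bound `(32 ε + 2 M² / K) t`
of `eventually_norm_nonadditivity_le` is `3 t / (4 M) < t / M`. -/
def nonadditivePart (f : X → Y) (M r : ℝ) (a b : X) : Set X :=
  {x | ∃ d : ApproxDirDerivPair f M (64 * M)⁻¹ (64 * M ^ 2)⁻¹ r a b x,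
    ∃ᶠ t in 𝓝[>] 0, t / M ≤ ‖f (x + t • (d.v - d.w)) - f x - t • (d.Lv - d.Lw)‖}

theorem directionallyPorous_nonadditivePart (f : X → Y) {M r : ℝ} (hM : 1 ≤ M) (hr : 0 < r)
    (a b : X) : DirectionallyPorous (nonadditivePart f M r a b) := by
  intro x hx
  obtain ⟨d, hfreq⟩ := id hx
  by_contra! hnp
  have hnp' (c : X) : ¬PorousAt (nonadditivePart f M r a b) x c := by
    rcases eq_or_ne c 0 with rfl | hc
    · exact not_porousAt_zero hx
    · exact hnp c hc
  have hM0 : 0 < M := by linarith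
  have hbound := eventually_norm_nonadditivity_le hnp' (fun _ ⟨dz, _⟩ => ⟨dz⟩) d
    (by positivity) (by field_simp; rfl) hr (K := 8 * M ^ 3)
    (by nlinarith [one_le_pow₀ (n := 3) hM])
  obtain ⟨t, hlow, hup, ht⟩ := (hfreq.and_eventually (hbound.and self_mem_nhdsWithin)).exists
  have hval : (32 * (64 * M)⁻¹ + 2 * M ^ 2 / (8 * M ^ 3)) * t = 3 / 4 * (t / M) := by
    field_simp; ring
  linarith [div_pos (mem_Ioi.1 ht) hM0]

theorem exists_mem_nonadditivePart {u : ℕ → X} (hu : DenseRange u) {f : X → Y} {x v w : X}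
    {Lv Lw : Y} (hlip : LipschitzAtPt f x) (hv : HasPosDirDeriv f x v Lv)
    (hw : HasPosDirDeriv f x w Lw) (hvw : ¬HasPosDirDeriv f x (v - w) (Lv - Lw)) :
    ∃ m p a b : ℕ, x ∈ nonadditivePart f (m + 1) (1 / (p + 1)) (u a) (u b) := by
  obtain ⟨K, δ, hδ, hK⟩ := hlip
  obtain ⟨η, hη, hfreq⟩ := exists_frequently_le_of_not_hasPosDirDeriv hvw
  obtain ⟨m, hm⟩ := exists_nat_ge (max (max K η⁻¹) ‖v‖)
  set M : ℝ := m + 1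
  have hmM : max (max K η⁻¹) ‖v‖ ≤ M := hm.trans (by simp [M])
  simp only [max_le_iff] at hmM
  have hM : 0 < M := by positivity
  obtain ⟨rv, hrv, hav⟩ := hv.exists_dirDerivApprox (ε := (64 * M)⁻¹) (by positivity)
  obtain ⟨rw, hrw, haw⟩ := hw.exists_dirDerivApprox (ε := (64 * M)⁻¹) (by positivity)
  obtain ⟨p, hp⟩ := exists_nat_one_div_lt (lt_min hδ (lt_min hrv hrw))
  simp only [lt_min_iff] at hp
  obtain ⟨a, ha⟩ := Metric.denseRange_iff.1 hu v (64 * M ^ 2)⁻¹ (by positivity)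
  obtain ⟨b, hb⟩ := Metric.denseRange_iff.1 hu w (64 * M ^ 2)⁻¹ (by positivity)
  refine ⟨m, p, a, b, ⟨v, w, Lv, Lw, LipschitzNear.mono hK hmM.1.1 hp.1.le, hmM.2,
    (dist_eq_norm v _ ▸ ha).le, (dist_eq_norm w _ ▸ hb).le, hav.mono hp.2.1.le, haw.mono hp.2.2.le⟩,
    (hfreq.and_eventually self_mem_nhdsWithin).mono fun t ⟨hle, ht⟩ => le_trans ?_ hle⟩
  rw [div_eq_inv_mul]
  exact mul_le_mul_of_nonneg_right (inv_le_of_inv_le₀ hη hmM.1.2) (le_of_lt ht)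

end Decomposition

theorem stmt11_general {X Y : Type*} [NormedAddCommGroup X] [NormedSpace ℝ X]
    [TopologicalSpace.SeparableSpace X]
    [NormedAddCommGroup Y] [NormedSpace ℝ Y]
    (G : Set X) (f : X → Y) :
    SigmaDirectionallyPorous {x : X | x ∈ G ∧ LipschitzAtPt f x ∧
      ∃ v w Lv Lw, HasPosDirDeriv f x v Lv ∧ HasPosDirDeriv f x w Lw ∧
        ¬ HasPosDirDeriv f x (v - w) (Lv - Lw)} := by
  have : Nonempty X := ⟨0⟩
  refine sigmaDirectionallyPorous_of_subset_iUnion (P := fun i : ℕ × ℕ × ℕ × ℕ =>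
      nonadditivePart f (i.1 + 1) (1 / (i.2.1 + 1)) (TopologicalSpace.denseSeq X i.2.2.1)
        (TopologicalSpace.denseSeq X i.2.2.2))
    (fun i => directionallyPorous_nonadditivePart f (by simp) (by positivity) _ _) ?_
  rintro x ⟨-, hlip, v, w, Lv, Lw, hv, hw, hvw⟩
  obtain ⟨m, p, a, b, hx⟩ :=
    exists_mem_nonadditivePart (TopologicalSpace.denseRange_denseSeq X) hlip hv hw hvw
  exact mem_iUnion.2 ⟨(m, p, a, b), hx⟩

theorem stmt11 {X Y : Type*} [NormedAddCommGroup X] [NormedSpace ℝ X] [CompleteSpace X]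
    [TopologicalSpace.SeparableSpace X]
    [NormedAddCommGroup Y] [NormedSpace ℝ Y] [CompleteSpace Y]
    (G : Set X) (hG : IsOpen G) (f : X → Y) :
    SigmaDirectionallyPorous {x : X | x ∈ G ∧ LipschitzAtPt f x ∧
      ∃ v w Lv Lw, HasPosDirDeriv f x v Lv ∧ HasPosDirDeriv f x w Lw ∧
        ¬ HasPosDirDeriv f x (v - w) (Lv - Lw)} :=
  stmt11_general G f
end

section
/- Let X, Y be Banach spaces, G ⊆ X open, and f : G → Y a mapping. For x ∈ G let U_x be the set of v ∈ X for which the one-sided directional derivative f'₊(x,v) exists. Then the set B of all x ∈ G such that f is Lipschitz at x and U_x is not closed in X is σ-directionally porous. -/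
open Filter Topology Set Metric

/-! If `u` lies in the closure of `U_x` but not in `U_x`, the difference quotients of `f` at `x`
in the direction `u` are not Cauchy (`Y` is complete), so they frequently stay `ε`-far from every
candidate limit. Comparing them with the convergent quotients in a nearby direction `w ∈ U_x`
shows that `‖f (x + t • u) - f (x + t • w)‖` is frequently large compared with `t * ‖u - w‖`.
A point `y` at which `f` is `C`-Lipschitz on a ball of fixed radius cannot come within
`t * ‖u - w‖ / 2` of `x + t • midpoint ℝ u w`, since the triangle inequality through `f y` would
bound that oscillation by `2 * C * t * ‖u - w‖`. Sorting the points of the set by their Lipschitz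
data therefore splits it into countably many directionally porous pieces. -/

lemma exists_pos_forall_frequently_le_dist {α E : Type*} [PseudoMetricSpace E] [CompleteSpace E]
    {l : Filter α} [l.NeBot] {g : α → E} (h : ∀ L, ¬ Tendsto g l (𝓝 L)) :
    ∃ ε > 0, ∀ L, ∃ᶠ a in l, ε ≤ dist (g a) L := by
  by_contra! hg
  obtain ⟨L, hL⟩ := cauchy_map_iff_exists_tendsto.mp <| Metric.cauchy_iff.mpr ⟨inferInstance,
    fun ε hε => by
      obtain ⟨L, hL⟩ := hg (ε / 2) (half_pos hε)
      refine ⟨g '' {a | dist (g a) L < ε / 2}, image_mem_map hL, ?_⟩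
      rintro _ ⟨a, ha, rfl⟩ _ ⟨b, hb, rfl⟩
      linarith [dist_triangle_right (g a) (g b) L, ha.out, hb.out]⟩
  exact h L hL

section
variable {X Y : Type*} [NormedAddCommGroup X] [NormedAddCommGroup Y]

lemma LipschitzAtPt.exists_nat {f : X → Y} {x : X} (h : LipschitzAtPt f x) :
    ∃ n : ℕ, ∀ z ∈ ball x (1 / (n + 1)), ‖f z - f x‖ ≤ n * ‖z - x‖ := by
  obtain ⟨K, δ, hδ, hK⟩ := h
  obtain ⟨n, hnδ, hnK⟩ := ((tendsto_one_div_add_atTop_nhds_zero_nat.eventually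
    (gt_mem_nhds hδ)).and (eventually_ge_atTop ⌈K⌉₊)).exists
  refine ⟨n, fun z hz => (hK z ((mem_ball_iff_norm.mp hz).trans hnδ)).trans ?_⟩
  exact mul_le_mul_of_nonneg_right ((Nat.le_ceil K).trans (by exact_mod_cast hnK)) (norm_nonneg _)

variable [NormedSpace ℝ X]

lemma ball_midpoint_inter_eq_empty {f : X → Y} {S : Set X} {C r : ℝ} (hC : 0 ≤ C)
    (hS : ∀ y ∈ S, ∀ z ∈ ball y r, ‖f z - f y‖ ≤ C * ‖z - y‖) {a b : X} (hab : ‖a - b‖ < r)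
    (hf : 2 * C * ‖a - b‖ < ‖f a - f b‖) :
    ball (midpoint ℝ a b) (‖a - b‖ / 2) ∩ S = ∅ := by
  refine eq_empty_iff_forall_notMem.mpr fun y ⟨hy, hyS⟩ => hf.not_ge ?_
  have hay : ‖a - y‖ < ‖a - b‖ := by
    have := dist_triangle a (midpoint ℝ a b) y
    rw [dist_left_midpoint] at this
    simp only [mem_ball, dist_comm y, Real.norm_ofNat, dist_eq_norm] at hy this
    linarith
  have hby : ‖b - y‖ < ‖a - b‖ := by
    have := dist_triangle b (midpoint ℝ a b) y
    rw [dist_comm b, dist_right_midpoint] at this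
    simp only [mem_ball, dist_comm y, Real.norm_ofNat, dist_eq_norm] at hy this
    linarith
  have hfa := hS y hyS a (mem_ball_iff_norm.mpr (hay.trans hab))
  have hfb := hS y hyS b (mem_ball_iff_norm.mpr (hby.trans hab))
  calc ‖f a - f b‖ ≤ ‖f a - f y‖ + ‖f b - f y‖ := by
        simpa only [norm_sub_rev (f y)] using norm_sub_le_norm_sub_add_norm_sub (f a) (f y) (f b)
    _ ≤ C * ‖a - y‖ + C * ‖b - y‖ := add_le_add hfa hfb
    _ ≤ 2 * C * ‖a - b‖ := by nlinarith

lemma directionallyPorous_of_frequently_lt {f : X → Y} {S : Set X} {C r : ℝ} (hC : 0 ≤ C)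
    (hr : 0 < r) (hS : ∀ y ∈ S, ∀ z ∈ ball y r, ‖f z - f y‖ ≤ C * ‖z - y‖)
    (hosc : ∀ x ∈ S, ∃ u w : X, ∃ᶠ t in 𝓝[>] (0:ℝ),
      2 * C * (t * ‖u - w‖) < ‖f (x + t • u) - f (x + t • w)‖) :
    DirectionallyPorous S := by
  intro x hx
  obtain ⟨u, w, hfreq⟩ := hosc x hx
  have hsmall : ∀ᶠ t in 𝓝[>] (0:ℝ), 0 < t ∧ t * ‖u - w‖ < r := by
    have : Tendsto (fun t : ℝ => t * ‖u - w‖) (𝓝 0) (𝓝 0) :=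
      (continuous_id.mul continuous_const).tendsto' 0 0 (zero_mul _)
    exact eventually_mem_nhdsWithin.and
      ((this.mono_left nhdsWithin_le_nhds).eventually (gt_mem_nhds hr))
  obtain ⟨t, ht, hpt⟩ := exists_seq_forall_of_frequently (hfreq.and_eventually hsmall)
  have huw : u ≠ w := by
    rintro rfl
    simpa using (hpt 0).1
  have huw_pos : 0 < ‖u - w‖ := norm_pos_iff.mpr (sub_ne_zero.mpr huw)
  have hball : ∀ n, ball (x + t n • midpoint ℝ u w) (‖u - w‖ / 2 * t n) ∩ S = ∅ := by
    intro n
    obtain ⟨hgap, htpos, htr⟩ := hpt n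
    have hdist : ‖(x + t n • u) - (x + t n • w)‖ = t n * ‖u - w‖ := by
      rw [add_sub_add_left_eq_sub, ← smul_sub, norm_smul, Real.norm_of_nonneg htpos.le]
    have hmid : midpoint ℝ (x + t n • u) (x + t n • w) = x + t n • midpoint ℝ u w := by
      simp only [midpoint_eq_smul_add, invOf_eq_inv]
      module
    convert ball_midpoint_inter_eq_empty hC hS (hdist ▸ htr) (hdist ▸ hgap) using 3
    · exact hmid.symm
    · rw [hdist]; ring
  refine ⟨midpoint ℝ u w, fun hv => ?_, ‖u - w‖ / 2, by positivity, t, fun n => (hpt n).2.1,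
    tendsto_nhds_of_tendsto_nhdsWithin ht, hball⟩
  have hx0 := hball 0
  rw [hv, smul_zero, add_zero] at hx0
  exact hx0.subset ⟨mem_ball_self (mul_pos (by positivity) (hpt 0).2.1), hx⟩

variable [NormedSpace ℝ Y]

lemma exists_frequently_lt_norm_sub [CompleteSpace Y] {f : X → Y} {x : X}
    (hU : ¬ IsClosed {v | ∃ L, HasPosDirDeriv f x v L}) (M : ℝ) :
    ∃ u w : X, ∃ᶠ t in 𝓝[>] (0:ℝ), M * (t * ‖u - w‖) < ‖f (x + t • u) - f (x + t • w)‖ := by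
  obtain ⟨u, hu, huU⟩ := not_subset.mp (mt closure_subset_iff_isClosed.mp hU)
  obtain ⟨ε, hε, hsep⟩ := exists_pos_forall_frequently_le_dist (l := 𝓝[>] (0:ℝ))
    (g := fun t => t⁻¹ • (f (x + t • u) - f x)) fun L hL => huU ⟨L, hL⟩
  have hnear : ∀ᶠ w in 𝓝 u, M * ‖u - w‖ < ε / 2 := by
    have : Tendsto (fun w => M * ‖u - w‖) (𝓝 u) (𝓝 0) :=
      ((continuous_const.sub continuous_id).norm.const_mul M).tendsto' u 0 (by simp)
    exact this.eventually (gt_mem_nhds (half_pos hε))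
  obtain ⟨w, hw, L, hL⟩ := mem_closure_iff_nhds.mp hu _ hnear
  refine ⟨u, w, ((hsep L).and_eventually ((hL.eventually (ball_mem_nhds L (half_pos hε))).and
    eventually_mem_nhdsWithin)).mono fun t ⟨hfar, hclose, ht⟩ => ?_⟩
  have hquot : dist (t⁻¹ • (f (x + t • u) - f x)) (t⁻¹ • (f (x + t • w) - f x)) =
      t⁻¹ * ‖f (x + t • u) - f (x + t • w)‖ := by
    rw [dist_eq_norm, ← smul_sub, sub_sub_sub_cancel_right, norm_smul, norm_inv,
      Real.norm_of_nonneg ht.le]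
  have := dist_triangle (t⁻¹ • (f (x + t • u) - f x)) (t⁻¹ • (f (x + t • w) - f x)) L
  rw [hquot] at this
  have hgap : t * (ε / 2) < ‖f (x + t • u) - f (x + t • w)‖ := by
    have : ε / 2 < t⁻¹ * ‖f (x + t • u) - f (x + t • w)‖ := by linarith
    rwa [inv_mul_eq_div, lt_div_iff₀ ht, mul_comm] at this
  calc M * (t * ‖u - w‖) = t * (M * ‖u - w‖) := by ring
    _ < t * (ε / 2) := mul_lt_mul_of_pos_left hw ht
    _ < _ := hgap

end

theorem stmt12_general {X Y : Type*} [NormedAddCommGroup X] [NormedSpace ℝ X]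
    [NormedAddCommGroup Y] [NormedSpace ℝ Y] [CompleteSpace Y]
    (G : Set X) (f : X → Y) :
    SigmaDirectionallyPorous {x : X | x ∈ G ∧ LipschitzAtPt f x ∧
      ¬ IsClosed {v : X | ∃ L, HasPosDirDeriv f x v L}} := by
  set B := {x : X | x ∈ G ∧ LipschitzAtPt f x ∧
    ¬ IsClosed {v : X | ∃ L, HasPosDirDeriv f x v L}}
  refine ⟨fun n : ℕ => B ∩ {x | ∀ z ∈ ball x (1 / (n + 1)), ‖f z - f x‖ ≤ n * ‖z - x‖},
    fun n => ?_, ?_⟩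
  · exact directionallyPorous_of_frequently_lt n.cast_nonneg Nat.one_div_pos_of_nat
      (fun y hy => hy.2) fun x hx => exists_frequently_lt_norm_sub hx.1.2.2 _
  · ext x
    simp only [mem_iUnion, mem_inter_iff]
    exact ⟨fun hx => hx.2.1.exists_nat.imp fun n hn => ⟨hx, hn⟩, fun ⟨_, hx, _⟩ => hx⟩

theorem stmt12 {X Y : Type*} [NormedAddCommGroup X] [NormedSpace ℝ X] [CompleteSpace X]
    [NormedAddCommGroup Y] [NormedSpace ℝ Y] [CompleteSpace Y]
    (G : Set X) (hG : IsOpen G) (f : X → Y) :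
    SigmaDirectionallyPorous {x : X | x ∈ G ∧ LipschitzAtPt f x ∧
      ¬ IsClosed {v : X | ∃ L, HasPosDirDeriv f x v L}} :=
  stmt12_general G f
end

section
/- Let X be a separable Banach space, Y a Banach space, G ⊆ X open, and f : G → Y a mapping. Then there exists a σ-directionally porous set C ⊆ G such that for every x ∈ G \ C at which f is Lipschitz, the set U_x of directions u ∈ X in which f'₊(x,u) exists is a closed linear subspace of X, and the mapping u ↦ f'₊(x,u) is linear on U_x. -/
open Filter Topology Set Metric

/-!
Fix a point `x` at which `f` is Lipschitz with constant `K`. Two properties of the one-sided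
derivatives there give the theorem.

* Stability: if `f'₊(x, u) = L`, the difference quotients of `f` at `x` in a direction `w` near
  `u` are eventually within `O(K ‖w - u‖)` of `L`. Quotients in a direction `w` in the closure of
  the set of differentiability directions are then Cauchy, so that set is closed (`Y` complete).
* Translation: `(f (x + t • (a + u)) - f (x + t • a)) / t → f'₊(x, u)`. Taking `a = v` and
  `a = -u` gives additivity and `f'₊(x, -u) = -f'₊(x, u)`, so the graph of `f'₊(x, ·)` is a
  linear subspace of `X × Y`.

Where either property fails at a definite rate, it fails on a set that is porous: a point `z` of
the same set close to `x + t • d` is Lipschitz with the same constant and carries derivative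
estimates at the same scale, and comparing `f` at `x + t • d` with `f` near `z` would restore
the property at `x`. So for small `t` one of the balls around `x + t • d` (for `d` among the
directions involved) misses the set. The sets are indexed by `K`, the scale, the precision and,
for translation, an approximate direction `u₀` from a countable dense set, which is where
separability enters.
-/

section PosDirDeriv

variable {X Y : Type*} [NormedAddCommGroup X] [NormedSpace ℝ X]
  [NormedAddCommGroup Y] [NormedSpace ℝ Y] {f : X → Y} {x u v : X} {L M : Y}

theorem dist_inv_smul_sub {t : ℝ} (ht : 0 < t) (p q L : Y) :
    dist (t⁻¹ • (p - q)) L = t⁻¹ * dist p (q + t • L) := by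
  rw [dist_eq_norm, dist_eq_norm, ← norm_smul_of_nonneg (inv_nonneg.2 ht.le),
    smul_sub t⁻¹ p (q + t • L), smul_add, smul_smul, inv_mul_cancel₀ ht.ne', one_smul, smul_sub]
  abel_nf

theorem dist_add_smul_add_smul (x : X) {t : ℝ} (ht : 0 ≤ t) (u v : X) :
    dist (x + t • u) (x + t • v) = t * dist u v := by
  rw [dist_add_left, dist_smul₀, Real.norm_of_nonneg ht]

theorem hasPosDirDeriv_iff :
    HasPosDirDeriv f x u L ↔
      ∀ ε > 0, ∀ᶠ t in 𝓝[>] 0, dist (f (x + t • u)) (f x + t • L) ≤ ε * t := by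
  rw [HasPosDirDeriv, nhds_basis_closedBall.tendsto_right_iff]
  refine forall₂_congr fun ε _ => eventually_congr ?_
  filter_upwards [self_mem_nhdsWithin] with t (ht : 0 < t)
  rw [mem_closedBall, dist_inv_smul_sub ht, inv_mul_le_iff₀ ht, mul_comm]

theorem HasPosDirDeriv.unique (h : HasPosDirDeriv f x u L) (h' : HasPosDirDeriv f x u M) :
    L = M :=
  tendsto_nhds_unique h h'

theorem hasPosDirDeriv_zero (f : X → Y) (x : X) : HasPosDirDeriv f x 0 0 := by
  simp [HasPosDirDeriv]

theorem HasPosDirDeriv.smul (h : HasPosDirDeriv f x u L) {c : ℝ} (hc : 0 < c) :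
    HasPosDirDeriv f x (c • u) (c • L) := by
  rw [hasPosDirDeriv_iff] at h ⊢
  intro ε hε
  filter_upwards [eventually_nhdsGT_zero_mul_left hc (h (ε / c) (by positivity))] with t ht
  rw [smul_smul, smul_smul, mul_comm t]
  convert ht using 1
  field_simp

theorem hasPosDirDeriv_smul_iff {c : ℝ} (hc : 0 < c) :
    HasPosDirDeriv f x (c • u) (c • L) ↔ HasPosDirDeriv f x u L := by
  refine ⟨fun h => ?_, fun h => h.smul hc⟩
  simpa [smul_smul, hc.ne'] using h.smul (inv_pos.2 hc)

end PosDirDeriv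

section Porosity

variable {X : Type*} [NormedAddCommGroup X] [NormedSpace ℝ X] {A B : Set X} {x d : X}

theorem PorousAt.of_frequently {p : ℝ} (hp : 0 < p)
    (h : ∃ᶠ t in 𝓝[>] 0, ball (x + t • d) (p * t) ∩ A = ∅) : PorousAt A x d := by
  obtain ⟨t, ht, hAt⟩ := exists_seq_forall_of_frequently (h.and_eventually self_mem_nhdsWithin)
  exact ⟨p, hp, t, fun n => (hAt n).2, ht.mono_right nhdsWithin_le_nhds, fun n => (hAt n).1⟩

theorem porousAt_or_eventually_nonempty (hx : x ∈ A) (d : X) {p : ℝ} (hp : 0 < p) :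
    (d ≠ 0 ∧ PorousAt A x d) ∨ ∀ᶠ t in 𝓝[>] 0, (ball (x + t • d) (p * t) ∩ A).Nonempty := by
  by_cases hd : d = 0
  · refine Or.inr ?_
    filter_upwards [self_mem_nhdsWithin] with t (ht : 0 < t)
    exact ⟨x, by simpa [hd] using mul_pos hp ht, hx⟩
  by_cases h : ∃ᶠ t in 𝓝[>] 0, ball (x + t • d) (p * t) ∩ A = ∅
  · exact Or.inl ⟨hd, .of_frequently hp h⟩
  · exact Or.inr ((not_frequently.1 h).mono fun t ht => nonempty_iff_ne_empty.2 ht)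

theorem DirectionallyPorous.mono_s13 (h : DirectionallyPorous A) (hBA : B ⊆ A) :
    DirectionallyPorous B := by
  intro x hx
  obtain ⟨v, hv, p, hp, t, ht, ht0, hball⟩ := h x (hBA hx)
  exact ⟨v, hv, p, hp, t, ht, ht0, fun n => subset_empty_iff.1 <|
    (inter_subset_inter_right _ hBA).trans (hball n).subset⟩

theorem DirectionallyPorous.sigmaDirectionallyPorous (h : DirectionallyPorous A) :
    SigmaDirectionallyPorous A :=
  ⟨fun _ => A, fun _ => h, iUnion_const A |>.symm⟩

theorem SigmaDirectionallyPorous.mono_s13 (h : SigmaDirectionallyPorous A) (hBA : B ⊆ A) :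
    SigmaDirectionallyPorous B := by
  obtain ⟨s, hs, rfl⟩ := h
  exact ⟨fun n => s n ∩ B, fun n => (hs n).mono_s13 inter_subset_left,
    by rw [← iUnion_inter, inter_eq_right.2 hBA]⟩

theorem SigmaDirectionallyPorous.iUnion {ι : Type*} [Countable ι] {A : ι → Set X}
    (h : ∀ i, SigmaDirectionallyPorous (A i)) : SigmaDirectionallyPorous (⋃ i, A i) := by
  choose s hs hA using h
  obtain ⟨g, hg⟩ := exists_surjective_nat (Option (ι × ℕ))
  refine ⟨fun n => (g n).elim ∅ fun p => s p.1 p.2, fun n => ?_, ?_⟩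
  · dsimp only
    cases g n with
    | none => exact fun _ hy => absurd hy (notMem_empty _)
    | some p => exact hs p.1 p.2
  · rw [hg.iUnion_comp (fun o => o.elim ∅ fun p => s p.1 p.2), iUnion_option]
    simp only [Option.elim_none, Option.elim_some, empty_union, iUnion_prod', hA]

theorem SigmaDirectionallyPorous.union (hA : SigmaDirectionallyPorous A)
    (hB : SigmaDirectionallyPorous B) : SigmaDirectionallyPorous (A ∪ B) := by
  rw [union_eq_iUnion]
  exact .iUnion fun b => by cases b <;> assumption

end Porosity

section PointLipschitz

variable {α β : Type*} [PseudoMetricSpace α] [PseudoMetricSpace β] {f : α → β} {x : α} {K δ : ℝ}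

def PointLipschitz (f : α → β) (x : α) (K δ : ℝ) : Prop :=
  ∀ y, dist y x ≤ δ → dist (f y) (f x) ≤ K * dist y x

theorem PointLipschitz.mono_s13 {δ' : ℝ} (h : PointLipschitz f x K δ) (hδ : δ' ≤ δ) :
    PointLipschitz f x K δ' :=
  fun y hy => h y (hy.trans hδ)

theorem PointLipschitz.dist_le (h : PointLipschitz f x K δ) (hK : 0 ≤ K) {y : α} {r : ℝ}
    (hy : dist y x ≤ r) (hr : r ≤ δ) : dist (f y) (f x) ≤ K * r :=
  (h y (hy.trans hr)).trans (mul_le_mul_of_nonneg_left hy hK)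

theorem dist_triangle6 (a b c d e g : α) :
    dist a g ≤ dist a b + dist b c + dist c d + dist d e + dist e g := by
  linarith [dist_triangle4 a b c d, dist_triangle4 a d e g]

end PointLipschitz

section LipschitzAtPt

variable {X Y : Type*} [NormedAddCommGroup X] [NormedAddCommGroup Y] {f : X → Y} {x : X}

theorem LipschitzAtPt.exists_pointLipschitz (h : LipschitzAtPt f x) :
    ∃ k : ℕ, ∃ δ > 0, PointLipschitz f x (k + 1) δ := by
  obtain ⟨K, δ, hδ, hK⟩ := h
  obtain ⟨k, hk⟩ := exists_nat_ge K
  refine ⟨k, δ / 2, by positivity, fun y hy => ?_⟩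
  simp only [dist_eq_norm] at hy ⊢
  exact (hK y (by linarith)).trans (mul_le_mul_of_nonneg_right (by linarith) (norm_nonneg _))

end LipschitzAtPt

section Pieces

variable {X Y : Type*} [NormedAddCommGroup X] [NormedSpace ℝ X]
  [NormedAddCommGroup Y] [NormedSpace ℝ Y] {f : X → Y}
  {x u w z : X} {L : Y} {K δ l t : ℝ}

def ApproxPosDirDeriv (f : X → Y) (x u : X) (L : Y) (δ ε : ℝ) : Prop :=
  ∀ s ∈ Ioc 0 δ, dist (f (x + s • u)) (f x + s • L) ≤ ε * s

theorem HasPosDirDeriv.exists_approx (h : HasPosDirDeriv f x u L) {ε δ₀ : ℝ} (hε : 0 < ε)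
    (hδ₀ : 0 < δ₀) :
    ∃ m : ℕ, 1 / (m + 1 : ℝ) ≤ δ₀ ∧ ApproxPosDirDeriv f x u L (1 / (m + 1)) ε := by
  obtain ⟨η, hη, hηε⟩ := (nhdsGT_basis (0 : ℝ)).eventually_iff.1 (hasPosDirDeriv_iff.1 h ε hε)
  obtain ⟨m, hm⟩ := exists_nat_one_div_lt (lt_min hδ₀ hη)
  exact ⟨m, hm.le.trans (min_le_left _ _),
    fun s hs => hηε ⟨hs.1, hs.2.trans_lt (hm.trans_le (min_le_right _ _))⟩⟩

def hadamardFailureSet (f : X → Y) (K δ l : ℝ) : Set X :=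
  {x | PointLipschitz f x K δ ∧ ∃ u w L, dist w u ≤ l ∧ ApproxPosDirDeriv f x u L δ (K * l) ∧
    ∃ᶠ t in 𝓝[>] 0, 4 * K * l * t < dist (f (x + t • w)) (f x + t • L)}

theorem dist_le_of_pointLipschitz_near (hK : 0 ≤ K) (hl : l ≤ 1) (ht : 0 < t) (htδ : 2 * t ≤ δ)
    (hu : ApproxPosDirDeriv f x u L δ (K * l)) (hwu : dist w u ≤ l)
    (hz : dist z (x + t • w) ≤ l * t) (hzLip : PointLipschitz f z K δ) :
    dist (f (x + t • w)) (f x + t • L) ≤ 4 * K * l * t := by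
  have hlt : l * t ≤ t := mul_le_of_le_one_left ht.le hl
  have hz' : dist (x + t • u) z ≤ 2 * l * t := by
    calc dist (x + t • u) z ≤ dist (x + t • u) (x + t • w) + dist z (x + t • w) :=
          dist_triangle_right _ _ _
      _ = t * dist w u + dist z (x + t • w) := by
          rw [dist_add_smul_add_smul x ht.le, dist_comm u]
      _ ≤ t * l + l * t := by gcongr
      _ = 2 * l * t := by ring
  calc dist (f (x + t • w)) (f x + t • L)
      ≤ dist (f (x + t • w)) (f z) + dist (f z) (f (x + t • u)) +
          dist (f (x + t • u)) (f x + t • L) := dist_triangle4 _ _ _ _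
    _ ≤ K * (l * t) + K * (2 * l * t) + K * l * t := by
        gcongr ?_ + ?_ + ?_
        · exact hzLip.dist_le hK ((dist_comm _ _).trans_le hz) (by linarith)
        · rw [dist_comm]; exact hzLip.dist_le hK hz' (by linarith)
        · exact hu t ⟨ht, by linarith⟩
    _ = 4 * K * l * t := by ring

theorem directionallyPorous_hadamardFailureSet (f : X → Y) (hK : 0 ≤ K) (hδ : 0 < δ)
    (hl : 0 < l) (hl1 : l ≤ 1) : DirectionallyPorous (hadamardFailureSet f K δ l) := by
  intro x hx
  obtain ⟨-, u, w, L, hwu, hu, hbad⟩ := id hx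
  rcases porousAt_or_eventually_nonempty hx w hl with hw | hmeet
  · exact ⟨w, hw⟩
  obtain ⟨t, hbad, ⟨z, hz, hzA⟩, ht, htδ⟩ :=
    (hbad.and_eventually (hmeet.and (Ioo_mem_nhdsGT (half_pos hδ)))).exists
  exact absurd (dist_le_of_pointLipschitz_near hK hl1 ht (by linarith) hu hwu
    (mem_ball.1 hz).le hzA.1) hbad.not_ge

end Pieces

section Translation

variable {X Y : Type*} [NormedAddCommGroup X] [NormedSpace ℝ X]
  [NormedAddCommGroup Y] [NormedSpace ℝ Y] {f : X → Y}
  {x u u₁ a w z₁ z₃ : X} {L L₁ : Y} {K δ l s t : ℝ}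

def translationFailureSet (f : X → Y) (u₀ : X) (K δ l : ℝ) : Set X :=
  {x | PointLipschitz f x K δ ∧ ∃ u L, dist u u₀ ≤ l ∧ ApproxPosDirDeriv f x u L δ (K * l) ∧
    ∃ a, ‖a‖ ≤ 1 ∧ ∃ᶠ t in 𝓝[>] 0,
      17 * K * l * t < dist (f (x + t • (a + u))) (f (x + t • a) + t • L)}

theorem dist_le_of_approxPosDirDeriv (hK : 0 ≤ K) (hl : l ≤ 1) (hs : 0 < s) (hsδ : 5 * s ≤ δ)
    (hxLip : PointLipschitz f x K δ) (hu : ApproxPosDirDeriv f x u L δ (K * l))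
    (hz₁ : dist z₁ x ≤ 2 * l * s) (hz₁u : ApproxPosDirDeriv f z₁ u₁ L₁ δ (K * l))
    (hu₁ : dist u₁ u ≤ 2 * l) (hz₃ : dist z₃ (x + s • u) ≤ l * s)
    (hz₃Lip : PointLipschitz f z₃ K δ) :
    dist L₁ L ≤ 10 * K * l := by
  have hls : l * s ≤ s := mul_le_of_le_one_left hs.le hl
  have hz₃' : dist (z₁ + s • u₁) z₃ ≤ 5 * l * s := by
    calc dist (z₁ + s • u₁) z₃ ≤ dist z₁ x + dist (s • u₁) (s • u) + dist z₃ (x + s • u) :=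
          (dist_triangle_right _ _ _).trans (add_le_add_left (dist_add_add_le _ _ _ _) _)
      _ = dist z₁ x + s * dist u₁ u + dist z₃ (x + s • u) := by
          rw [dist_smul₀, Real.norm_of_nonneg hs.le]
      _ ≤ 2 * l * s + s * (2 * l) + l * s := by gcongr
      _ = 5 * l * s := by ring
  refine le_of_mul_le_mul_left ?_ hs
  calc s * dist L₁ L = dist (f z₁ + s • L₁) (f z₁ + s • L) := by
        rw [dist_add_left, dist_smul₀, Real.norm_of_nonneg hs.le]
    _ ≤ dist (f z₁ + s • L₁) (f (z₁ + s • u₁)) + dist (f (z₁ + s • u₁)) (f z₃) +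
          dist (f z₃) (f (x + s • u)) + dist (f (x + s • u)) (f x + s • L) +
          dist (f x + s • L) (f z₁ + s • L) := dist_triangle6 _ _ _ _ _ _
    _ ≤ K * l * s + K * (5 * l * s) + K * (l * s) + K * l * s + K * (2 * l * s) := by
        gcongr ?_ + ?_ + ?_ + ?_ + ?_
        · rw [dist_comm]; exact hz₁u s ⟨hs, by linarith⟩
        · exact hz₃Lip.dist_le hK hz₃' (by linarith)
        · rw [dist_comm]; exact hz₃Lip.dist_le hK ((dist_comm _ _).trans_le hz₃) (by linarith)
        · exact hu s ⟨hs, by linarith⟩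
        · rw [dist_add_right, dist_comm]; exact hxLip.dist_le hK hz₁ (by linarith)
    _ = s * (10 * K * l) := by ring

/-- The key estimate: a point `z₁` near `x + t • a` carrying a derivative in a direction `u₁`
near `u` transports `f'₊(x, u)` to the base point `x + t • a`. The comparison of the two
derivatives is done at the larger scale `s = t / l`, near `x + s • u`. -/
theorem dist_translate_le (hK : 0 ≤ K) (hl : l ≤ 1) (hs : 0 < s) (hsδ : 5 * s ≤ δ)
    (ht : 0 < t) (hts : t = l * s) (ha : ‖a‖ ≤ 1)
    (hxLip : PointLipschitz f x K δ) (hu : ApproxPosDirDeriv f x u L δ (K * l))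
    (hz₁ : dist z₁ (x + t • a) ≤ l * t) (hz₁Lip : PointLipschitz f z₁ K δ)
    (hz₁u : ApproxPosDirDeriv f z₁ u₁ L₁ δ (K * l)) (hu₁ : dist u₁ u ≤ 2 * l)
    (hz₃ : dist z₃ (x + s • u) ≤ l * s) (hz₃Lip : PointLipschitz f z₃ K δ)
    (hw : dist w (x + t • (a + u)) ≤ l * t) (hwLip : PointLipschitz f w K δ) :
    dist (f (x + t • (a + u))) (f (x + t • a) + t • L) ≤ 17 * K * l * t := by
  have hts' : t ≤ s := hts ▸ mul_le_of_le_one_left hs.le hl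
  have hlt : l * t ≤ t := mul_le_of_le_one_left ht.le hl
  have hz₁x : dist z₁ x ≤ 2 * l * s := by
    calc dist z₁ x ≤ dist z₁ (x + t • a) + dist (x + t • a) x := dist_triangle _ _ _
      _ ≤ l * t + t := by
          rw [dist_self_add_left, norm_smul, Real.norm_of_nonneg ht.le]
          gcongr
          exact mul_le_of_le_one_right ht.le ha
      _ ≤ 2 * l * s := by rw [hts] at hlt ⊢; linarith
  have hL₁ := dist_le_of_approxPosDirDeriv hK hl hs hsδ hxLip hu hz₁x hz₁u hu₁ hz₃ hz₃Lip
  have hw' : dist (z₁ + t • u₁) w ≤ 4 * l * t := by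
    calc dist (z₁ + t • u₁) w
        ≤ dist z₁ (x + t • a) + dist (t • u₁) (t • u) + dist w (x + t • (a + u)) := by
          refine (dist_triangle_right _ _ (x + t • (a + u))).trans ?_
          gcongr
          rw [smul_add, ← add_assoc]
          exact dist_add_add_le _ _ _ _
      _ = dist z₁ (x + t • a) + t * dist u₁ u + dist w (x + t • (a + u)) := by
          rw [dist_smul₀, Real.norm_of_nonneg ht.le]
      _ ≤ l * t + t * (2 * l) + l * t := by gcongr
      _ = 4 * l * t := by ring
  calc dist (f (x + t • (a + u))) (f (x + t • a) + t • L)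
      ≤ dist (f (x + t • (a + u))) (f w) + dist (f w) (f (z₁ + t • u₁)) +
          dist (f (z₁ + t • u₁)) (f z₁ + t • L₁) + dist (f z₁ + t • L₁) (f (x + t • a) + t • L₁) +
          dist (f (x + t • a) + t • L₁) (f (x + t • a) + t • L) := dist_triangle6 _ _ _ _ _ _
    _ ≤ K * (l * t) + K * (4 * l * t) + K * l * t + K * (l * t) + t * (10 * K * l) := by
        gcongr ?_ + ?_ + ?_ + ?_ + ?_
        · exact hwLip.dist_le hK ((dist_comm _ _).trans_le hw) (by linarith)
        · rw [dist_comm]; exact hwLip.dist_le hK hw' (by linarith)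
        · exact hz₁u t ⟨ht, by linarith⟩
        · rw [dist_add_right, dist_comm]
          exact hz₁Lip.dist_le hK ((dist_comm _ _).trans_le hz₁) (by linarith)
        · rw [dist_add_left, dist_smul₀, Real.norm_of_nonneg ht.le]
          gcongr
    _ = 17 * K * l * t := by ring

theorem directionallyPorous_translationFailureSet (f : X → Y) (u₀ : X) (hK : 0 ≤ K)
    (hδ : 0 < δ) (hl : 0 < l) (hl1 : l ≤ 1) :
    DirectionallyPorous (translationFailureSet f u₀ K δ l) := by
  intro x hx
  obtain ⟨hxLip, u, L, hu₀, hu, a, ha, hbad⟩ := id hx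
  rcases porousAt_or_eventually_nonempty hx u hl with h | hu'
  · exact ⟨u, h⟩
  rcases porousAt_or_eventually_nonempty hx a hl with h | ha'
  · exact ⟨a, h⟩
  rcases porousAt_or_eventually_nonempty hx (a + u) hl with h | hau'
  · exact ⟨a + u, h⟩
  have hs : ∀ᶠ t in 𝓝[>] 0, l⁻¹ * t ∈ Ioo 0 (δ / 5) ∧
      (ball (x + (l⁻¹ * t) • u) (l * (l⁻¹ * t)) ∩ translationFailureSet f u₀ K δ l).Nonempty :=
    eventually_nhdsGT_zero_mul_left (inv_pos.2 hl)
      (Filter.Eventually.and (Ioo_mem_nhdsGT (by positivity : (0 : ℝ) < δ / 5)) hu')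
  obtain ⟨t, hbad, ⟨hs, z₃, hz₃, hz₃A⟩, ⟨z₁, hz₁, hz₁A⟩, ⟨w, hw, hwA⟩, ht⟩ :=
    (hbad.and_eventually (hs.and (ha'.and (hau'.and self_mem_nhdsWithin)))).exists
  obtain ⟨hz₁Lip, u₁, L₁, hu₁₀, hz₁u, -⟩ := hz₁A
  refine absurd (dist_translate_le hK hl1 hs.1 (by linarith [hs.2]) ht
    (by field_simp) ha hxLip hu (mem_ball.1 hz₁).le hz₁Lip hz₁u
    (dist_triangle_right _ _ u₀ |>.trans (by linarith)) (mem_ball.1 hz₃).le hz₃A.1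
    (mem_ball.1 hw).le hwA.1) hbad.not_ge

end Translation

section GoodPoints

variable {X Y : Type*} [NormedAddCommGroup X] [NormedSpace ℝ X]
  [NormedAddCommGroup Y] [NormedSpace ℝ Y] {f : X → Y} {x u v : X} {L M : Y}

def PosDirDerivsStable (f : X → Y) (x : X) : Prop :=
  ∀ ε > 0, ∃ η > 0, ∀ u w L, HasPosDirDeriv f x u L → dist w u ≤ η →
    ∀ᶠ t in 𝓝[>] 0, dist (f (x + t • w)) (f x + t • L) ≤ ε * t

def PosDirDerivsTranslate (f : X → Y) (x : X) : Prop :=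
  ∀ u a L, HasPosDirDeriv f x u L → ‖a‖ ≤ 1 → ∀ ε > 0,
    ∀ᶠ t in 𝓝[>] 0, dist (f (x + t • (a + u))) (f (x + t • a) + t • L) ≤ ε * t

theorem PosDirDerivsStable.isClosed [CompleteSpace Y] (h : PosDirDerivsStable f x) :
    IsClosed {u | ∃ L, HasPosDirDeriv f x u L} := by
  refine closure_subset_iff_isClosed.1 fun w hw => ?_
  set q : ℝ → Y := fun t => t⁻¹ • (f (x + t • w) - f x)
  suffices Cauchy (map q (𝓝[>] 0)) from cauchy_map_iff_exists_tendsto.1 this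
  refine Metric.cauchy_iff.2 ⟨inferInstance, fun ε hε => ?_⟩
  obtain ⟨η, hη, hηε⟩ := h (ε / 3) (by positivity)
  obtain ⟨u, ⟨L, hL⟩, hwu⟩ := Metric.mem_closure_iff.1 hw η hη
  have hq : ∀ᶠ t in 𝓝[>] 0, dist (q t) L ≤ ε / 3 := by
    filter_upwards [hηε u w L hL hwu.le, self_mem_nhdsWithin] with t ht (htpos : 0 < t)
    rwa [dist_inv_smul_sub htpos, inv_mul_le_iff₀ htpos, mul_comm]
  refine ⟨q '' {t | dist (q t) L ≤ ε / 3}, image_mem_map hq, ?_⟩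
  rintro _ ⟨t, (ht : dist (q t) L ≤ ε / 3), rfl⟩ _ ⟨t', (ht' : dist (q t') L ≤ ε / 3), rfl⟩
  linarith [dist_triangle_right (q t) (q t') L]

theorem exists_pos_norm_smul_le_one (u : X) : ∃ c : ℝ, 0 < c ∧ ‖c • u‖ ≤ 1 := by
  refine ⟨(‖u‖ + 1)⁻¹, by positivity, ?_⟩
  rw [norm_smul, Real.norm_of_nonneg (by positivity), inv_mul_le_iff₀ (by positivity)]
  linarith

namespace PosDirDerivsTranslate

variable (h : PosDirDerivsTranslate f x)
include h

theorem hasPosDirDeriv_neg (hu : HasPosDirDeriv f x u L) : HasPosDirDeriv f x (-u) (-L) := by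
  obtain ⟨c, hc, hcu⟩ := exists_pos_norm_smul_le_one u
  rw [← hasPosDirDeriv_smul_iff hc, smul_neg, smul_neg, hasPosDirDeriv_iff]
  intro ε hε
  filter_upwards [h _ _ _ (hu.smul hc) (by rwa [norm_neg]) ε hε] with t ht
  rw [smul_neg t (c • L), ← sub_eq_add_neg, dist_sub_eq_dist_add_right, dist_comm]
  rwa [neg_add_cancel, smul_zero, add_zero] at ht

theorem hasPosDirDeriv_add (hu : HasPosDirDeriv f x u L) (hv : HasPosDirDeriv f x v M) :
    HasPosDirDeriv f x (u + v) (L + M) := by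
  obtain ⟨c, hc, hcv⟩ := exists_pos_norm_smul_le_one v
  rw [← hasPosDirDeriv_smul_iff hc, smul_add, smul_add, hasPosDirDeriv_iff]
  intro ε hε
  filter_upwards [h _ _ _ (hu.smul hc) hcv (ε / 2) (by positivity),
    hasPosDirDeriv_iff.1 (hv.smul hc) (ε / 2) (by positivity)] with t htu htv
  calc dist (f (x + t • (c • u + c • v))) (f x + t • (c • L + c • M))
      ≤ dist (f (x + t • (c • v + c • u))) (f (x + t • (c • v)) + t • (c • L)) +
          dist (f (x + t • (c • v)) + t • (c • L)) (f x + t • (c • M) + t • (c • L)) := by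
        rw [add_comm (c • u), smul_add t (c • L), add_comm (t • (c • L)), ← add_assoc]
        exact dist_triangle _ _ _
    _ ≤ ε / 2 * t + ε / 2 * t := by rw [dist_add_right]; exact add_le_add htu htv
    _ = ε * t := by ring

theorem hasPosDirDeriv_smul (hu : HasPosDirDeriv f x u L) (c : ℝ) :
    HasPosDirDeriv f x (c • u) (c • L) := by
  rcases lt_trichotomy c 0 with hc | rfl | hc
  · simpa using (h.hasPosDirDeriv_neg hu).smul (neg_pos.2 hc)
  · simpa using hasPosDirDeriv_zero f x
  · exact hu.smul hc

theorem exists_linearMap :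
    ∃ U : Submodule ℝ X, (U : Set X) = {u | ∃ L, HasPosDirDeriv f x u L} ∧
      ∃ T : U →ₗ[ℝ] Y, ∀ u : U, HasPosDirDeriv f x u (T u) := by
  let g : Submodule ℝ (X × Y) :=
    { carrier := {p | HasPosDirDeriv f x p.1 p.2}
      add_mem' := h.hasPosDirDeriv_add
      zero_mem' := hasPosDirDeriv_zero f x
      smul_mem' := fun c _ hp => h.hasPosDirDeriv_smul hp c }
  have hg : ∀ p ∈ g, p.1 = 0 → p.2 = 0 := fun p hp hp0 =>
    (hp0 ▸ hp : HasPosDirDeriv f x 0 p.2).unique (hasPosDirDeriv_zero f x)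
  refine ⟨g.toLinearPMap.domain, ?_, g.toLinearPMap.toFun, g.mem_graph_toLinearPMap hg⟩
  ext u
  simp [Submodule.toLinearPMap_domain, g]

end PosDirDerivsTranslate

end GoodPoints

section Exceptional

variable {X Y : Type*} [NormedAddCommGroup X] [NormedSpace ℝ X]
  [NormedAddCommGroup Y] [NormedSpace ℝ Y] {f : X → Y} {x : X} {D : Set X}

def hadamardExceptionalSet (f : X → Y) : Set X :=
  ⋃ (k : ℕ) (m : ℕ) (n : ℕ), hadamardFailureSet f (k + 1) (1 / (m + 1)) (1 / (n + 1))

def translationExceptionalSet (f : X → Y) (D : Set X) : Set X :=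
  ⋃ (u₀ : D) (k : ℕ) (m : ℕ) (n : ℕ),
    translationFailureSet f u₀ (k + 1) (1 / (m + 1)) (1 / (n + 1))

theorem sigmaDirectionallyPorous_hadamardExceptionalSet (f : X → Y) :
    SigmaDirectionallyPorous (hadamardExceptionalSet f) :=
  .iUnion fun _ => .iUnion fun _ => .iUnion fun n =>
    (directionallyPorous_hadamardFailureSet f (by positivity) (by positivity) (by positivity)
      (div_le_one_of_le₀ (by simp) (by positivity))).sigmaDirectionallyPorous

theorem sigmaDirectionallyPorous_translationExceptionalSet (f : X → Y) (hD : D.Countable) :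
    SigmaDirectionallyPorous (translationExceptionalSet f D) :=
  have := hD.to_subtype
  .iUnion fun u₀ => .iUnion fun _ => .iUnion fun _ => .iUnion fun n =>
    (directionallyPorous_translationFailureSet f u₀ (by positivity) (by positivity)
      (by positivity) (div_le_one_of_le₀ (by simp) (by positivity))).sigmaDirectionallyPorous

theorem posDirDerivsStable_of_notMem (hLip : LipschitzAtPt f x)
    (hx : x ∉ hadamardExceptionalSet f) : PosDirDerivsStable f x := by
  obtain ⟨k, δ₀, hδ₀, hk⟩ := hLip.exists_pointLipschitz
  intro ε hε
  obtain ⟨n, hn⟩ := exists_nat_one_div_lt (show 0 < ε / (4 * (k + 1)) by positivity)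
  refine ⟨1 / (n + 1), by positivity, fun u w L hu hwu => ?_⟩
  obtain ⟨m, hm, hum⟩ := hu.exists_approx (by positivity : 0 < (k + 1 : ℝ) * (1 / (n + 1))) hδ₀
  have hnot := fun hfreq => hx <| mem_iUnion_of_mem k <| mem_iUnion_of_mem m <|
    mem_iUnion_of_mem n ⟨hk.mono_s13 hm, u, w, L, hwu, hum, hfreq⟩
  filter_upwards [not_frequently.1 hnot, self_mem_nhdsWithin] with t ht (htpos : 0 < t)
  rw [lt_div_iff₀ (by positivity)] at hn
  exact (not_lt.1 ht).trans (by nlinarith)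

theorem posDirDerivsTranslate_of_notMem (hD : Dense D) (hLip : LipschitzAtPt f x)
    (hx : x ∉ translationExceptionalSet f D) : PosDirDerivsTranslate f x := by
  obtain ⟨k, δ₀, hδ₀, hk⟩ := hLip.exists_pointLipschitz
  intro u a L hu ha ε hε
  obtain ⟨n, hn⟩ := exists_nat_one_div_lt (show 0 < ε / (17 * (k + 1)) by positivity)
  obtain ⟨u₀, hu₀D, hu₀⟩ := hD.exists_dist_lt u (show 0 < 1 / (n + 1 : ℝ) by positivity)
  obtain ⟨m, hm, hum⟩ := hu.exists_approx (by positivity : 0 < (k + 1 : ℝ) * (1 / (n + 1))) hδ₀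
  have hnot := fun hfreq => hx <| mem_iUnion_of_mem ⟨u₀, hu₀D⟩ <| mem_iUnion_of_mem k <|
    mem_iUnion_of_mem m <| mem_iUnion_of_mem n ⟨hk.mono_s13 hm, u, L, hu₀.le, hum, a, ha, hfreq⟩
  filter_upwards [not_frequently.1 hnot, self_mem_nhdsWithin] with t ht (htpos : 0 < t)
  rw [lt_div_iff₀ (by positivity)] at hn
  exact (not_lt.1 ht).trans (by nlinarith)

end Exceptional

theorem stmt13_general {X Y : Type*} [NormedAddCommGroup X] [NormedSpace ℝ X]
    [TopologicalSpace.SeparableSpace X]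
    [NormedAddCommGroup Y] [NormedSpace ℝ Y] [CompleteSpace Y]
    (G : Set X) (f : X → Y) :
    ∃ C : Set X, SigmaDirectionallyPorous C ∧ C ⊆ G ∧
      ∀ x ∈ G \ C, LipschitzAtPt f x →
        ∃ U : Submodule ℝ X, (U : Set X) = {u : X | ∃ L, HasPosDirDeriv f x u L} ∧
          IsClosed (U : Set X) ∧
          ∃ T : U →ₗ[ℝ] Y, ∀ u : U, HasPosDirDeriv f x (u : X) (T u) := by
  obtain ⟨D, hDc, hD⟩ := TopologicalSpace.exists_countable_dense X
  refine ⟨G ∩ (hadamardExceptionalSet f ∪ translationExceptionalSet f D),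
    ((sigmaDirectionallyPorous_hadamardExceptionalSet f).union
      (sigmaDirectionallyPorous_translationExceptionalSet f hDc)).mono_s13 inter_subset_right,
    inter_subset_left, fun x ⟨hxG, hxC⟩ hLip => ?_⟩
  have hx : x ∉ hadamardExceptionalSet f ∪ translationExceptionalSet f D := fun h => hxC ⟨hxG, h⟩
  obtain ⟨U, hU, T, hT⟩ :=
    (posDirDerivsTranslate_of_notMem hD hLip fun h => hx (Or.inr h)).exists_linearMap
  refine ⟨U, hU, ?_, T, hT⟩
  rw [hU]
  exact (posDirDerivsStable_of_notMem hLip fun h => hx (Or.inl h)).isClosed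

theorem stmt13 {X Y : Type*} [NormedAddCommGroup X] [NormedSpace ℝ X] [CompleteSpace X]
    [TopologicalSpace.SeparableSpace X]
    [NormedAddCommGroup Y] [NormedSpace ℝ Y] [CompleteSpace Y]
    (G : Set X) (hG : IsOpen G) (f : X → Y) :
    ∃ C : Set X, SigmaDirectionallyPorous C ∧ C ⊆ G ∧
      ∀ x ∈ G \ C, LipschitzAtPt f x →
        ∃ U : Submodule ℝ X, (U : Set X) = {u : X | ∃ L, HasPosDirDeriv f x u L} ∧
          IsClosed (U : Set X) ∧
          ∃ T : U →ₗ[ℝ] Y, ∀ u : U, HasPosDirDeriv f x (u : X) (T u) :=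
  stmt13_general G f
end
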